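/- Let |Ψ⟩ = (a|00⟩ + b|S⟩ + c·e^{iφ}|11⟩)⊗|0⟩ with a, b, c, φ real. Then Q(|Ψ⟩⟨Ψ|) = (15a² + 10b² + 5c²)·𝟙 + 2√2·b·(3a + 2c·cos φ)·X + 4√2·bc·sin φ·Y + (9a² + 2b² - c²)·Z, where Q(M) := 4!·tr_{1,2,3}[P₄(M⊗𝟙)] with P₄ the projector onto Sym⁴(ℂ²), and X, Y, Z are the Pauli matrices. Consequently the spectral norm ‖Q(|Ψ⟩⟨Ψ|)‖ = 15a² + 10b² + 5c² + sqrt(8b²|3a + 2c·e^{iφ}|² + (9a² + 2b² - c²)²). -/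

import Mathlib

/-- The projector onto the symmetric subspace `Sym⁴(ℂ²)` of `(ℂ²)^{⊗4}`. -/
noncomputable def P4 : Matrix (Fin 4 → Fin 2) (Fin 4 → Fin 2) ℂ :=
  fun v w => (1/24) * ∑ σ : Equiv.Perm (Fin 4), if (fun i => w (σ i)) = v then 1 else 0

/-- The first three tensor factors of an index of `(ℂ²)^{⊗4}`. -/
def front (v : Fin 4 → Fin 2) : Fin 3 → Fin 2 := fun i => v i.castSucc

/-- `M ⊗ 𝟙` for `M` an operator on `(ℂ²)^{⊗3}`. -/
noncomputable def tensId (M : Matrix (Fin 3 → Fin 2) (Fin 3 → Fin 2) ℂ) :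
    Matrix (Fin 4 → Fin 2) (Fin 4 → Fin 2) ℂ :=
  fun v w => M (front v) (front w) * (if v (Fin.last 3) = w (Fin.last 3) then 1 else 0)

/-- `Q(M) = 4!·tr_{1,2,3}[P₄ (M ⊗ 𝟙)]`. -/
noncomputable def Qmap (M : Matrix (Fin 3 → Fin 2) (Fin 3 → Fin 2) ℂ) :
    Matrix (Fin 2) (Fin 2) ℂ :=
  fun x y => 24 * ∑ u : Fin 3 → Fin 2, (P4 * tensId M) (Fin.snoc u x) (Fin.snoc u y)

noncomputable def σX : Matrix (Fin 2) (Fin 2) ℂ := !![0, 1; 1, 0]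
noncomputable def σY : Matrix (Fin 2) (Fin 2) ℂ := !![0, -Complex.I; Complex.I, 0]
noncomputable def σZ : Matrix (Fin 2) (Fin 2) ℂ := !![1, 0; 0, -1]

/-- Coefficients of `|Φ⟩ = a|00⟩ + b|S⟩ + c e^{iφ}|11⟩`. -/
noncomputable def Φm (a b c φ : ℝ) (i j : Fin 2) : ℂ :=
  if i = 0 ∧ j = 0 then (a : ℂ)
  else if i = 1 ∧ j = 1 then (c : ℂ) * Complex.exp (Complex.I * (φ : ℂ))
  else (b : ℂ) / (Real.sqrt 2 : ℂ)

/-- `|Ψ⟩ = |Φ⟩ ⊗ |0⟩`. -/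
noncomputable def Ψv (a b c φ : ℝ) (v : Fin 3 → Fin 2) : ℂ :=
  if v 2 = 0 then Φm a b c φ (v 0) (v 1) else 0

/-- `|Ψ⟩⟨Ψ|`. -/
noncomputable def outer (a b c φ : ℝ) :
    Matrix (Fin 3 → Fin 2) (Fin 3 → Fin 2) ℂ :=
  fun v w => Ψv a b c φ v * (starRingEnd ℂ) (Ψv a b c φ w)

/-
24·P₄ has entry k!(4-k)! between basis vectors of (ℂ²)^{⊗4} of the same Hamming weight k (the
number of permutations fixing such a vector) and 0 otherwise. Hence Q of |Φ⟩⟨Φ| ⊗ |0⟩⟨0| is an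
explicit 2×2 matrix in the coefficients of Φ, which for our Φ is t𝟙 + xX + yY + zZ. Its norm is
t + √(x² + y² + z²): the traceless part B satisfies B² = (x² + y² + z²)𝟙, so the C*-identity
gives ‖B‖, and t + ‖B‖ is a root of the characteristic polynomial, hence in the spectrum.
-/

open Matrix Finset ComplexConjugate

lemma sum_fun_fin_succ {α M : Type*} [Fintype α] [AddCommMonoid M] {n : ℕ}
    (f : (Fin (n + 1) → α) → M) : ∑ v, f v = ∑ i, ∑ v : Fin n → α, f (vecCons i v) := by
  rw [← (Fin.consEquiv fun _ => α).sum_comp, Fintype.sum_prod_type]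
  rfl

lemma card_perm_comp_eq : ∀ v w : Fin 4 → Fin 2,
    #{σ : Equiv.Perm (Fin 4) | (fun i => w (σ i)) = v}
      = if (∑ i, (v i : ℕ)) = (∑ i, (w i : ℕ))
        then (∑ i, (v i : ℕ)).factorial * (4 - ∑ i, (v i : ℕ)).factorial else 0 := by
  decide

lemma P4_apply (v w : Fin 4 → Fin 2) : 24 * P4 v w =
    if (∑ i, (v i : ℕ)) = (∑ i, (w i : ℕ))
      then (((∑ i, (v i : ℕ)).factorial * (4 - ∑ i, (v i : ℕ)).factorial : ℕ) : ℂ) else 0 := by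
  rw [P4, Finset.sum_boole, card_perm_comp_eq]
  split_ifs <;> simp

lemma P4_snoc_apply (u w : Fin 3 → Fin 2) (x y : Fin 2) :
    24 * P4 (Fin.snoc u x) (Fin.snoc w y) =
      if (∑ i, (u i : ℕ)) + x = (∑ i, (w i : ℕ)) + y
        then ((((∑ i, (u i : ℕ)) + x).factorial * (4 - ((∑ i, (u i : ℕ)) + x)).factorial : ℕ) : ℂ)
        else 0 := by
  rw [P4_apply]
  simp only [Fin.sum_univ_castSucc (n := 3), Fin.snoc_castSucc, Fin.snoc_last]

lemma front_snoc (w : Fin 3 → Fin 2) (z : Fin 2) : front (Fin.snoc w z) = w :=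
  Fin.init_snoc (α := fun _ => Fin 2) z w

lemma Qmap_apply (M : Matrix (Fin 3 → Fin 2) (Fin 3 → Fin 2) ℂ) (x y : Fin 2) :
    Qmap M x y = ∑ u, ∑ w, 24 * P4 (Fin.snoc u x) (Fin.snoc w y) * M w u := by
  simp only [Qmap, mul_apply, tensId, Finset.mul_sum]
  refine Finset.sum_congr rfl fun u _ => ?_
  rw [← (Fin.snocEquiv fun _ => Fin 2).sum_comp, Fintype.sum_prod_type, Finset.sum_comm]
  refine Finset.sum_congr rfl fun w _ => ?_
  have hlast (v : Fin 3 → Fin 2) (z : Fin 2) : (Fin.snoc v z : Fin 4 → Fin 2) (Fin.last 3) = z :=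
    Fin.snoc_last (α := fun _ => Fin 2) z v
  simp only [Fin.snocEquiv, Equiv.coe_fn_mk, front_snoc, hlast, mul_ite, mul_one, mul_zero,
    Fintype.sum_ite_eq']
  ring

def tensorKetZero (Φ : Matrix (Fin 2) (Fin 2) ℂ) (v : Fin 3 → Fin 2) : ℂ :=
  if v 2 = 0 then Φ (v 0) (v 1) else 0

-- Only the symmetric part `β + β'` of `Φ` survives the projection onto `Sym⁴(ℂ²)`.
theorem Qmap_vecMulVec_tensorKetZero (α β β' γ : ℂ) :
    let ψ := tensorKetZero !![α, β; β', γ]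
    let s := β + β'
    Qmap (vecMulVec ψ (star ψ)) =
      !![24 * α * conj α + 6 * s * conj s + 4 * γ * conj γ, 6 * α * conj s + 4 * s * conj γ;
         6 * s * conj α + 4 * γ * conj s, 6 * α * conj α + 4 * s * conj s + 6 * γ * conj γ] := by
  ext x y
  rw [Qmap_apply]
  fin_cases x <;> fin_cases y <;>
    simp [sum_fun_fin_succ, Fin.sum_univ_two, P4_snoc_apply, vecMulVec, tensorKetZero,
      Fin.sum_univ_three, Nat.factorial] <;> ring

section Pauli

variable (x y z : ℝ)

lemma pauli_eq :
    (x : ℂ) • σX + (y : ℂ) • σY + (z : ℂ) • σZ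
      = !![(z : ℂ), x - y * Complex.I; x + y * Complex.I, -z] := by
  ext i j
  fin_cases i <;> fin_cases j <;> simp [σX, σY, σZ, sub_eq_add_neg]

lemma pauli_decomposition_eq (t : ℝ) :
    (t : ℂ) • (1 : Matrix (Fin 2) (Fin 2) ℂ) + (x : ℂ) • σX + (y : ℂ) • σY + (z : ℂ) • σZ
      = !![t + (z : ℂ), x - y * Complex.I; x + y * Complex.I, t - z] := by
  ext i j
  fin_cases i <;> fin_cases j <;> simp [σX, σY, σZ, sub_eq_add_neg]

lemma pauli_mul_self :
    ((x : ℂ) • σX + (y : ℂ) • σY + (z : ℂ) • σZ) * ((x : ℂ) • σX + (y : ℂ) • σY + (z : ℂ) • σZ)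
      = ((x ^ 2 + y ^ 2 + z ^ 2 : ℝ) : ℂ) • 1 := by
  rw [pauli_eq, mul_fin_two, smul_one_eq_diagonal, diagonal_fin_two]
  ext i j
  fin_cases i <;> fin_cases j <;>
    simp only [Fin.zero_eta, Fin.mk_one, of_apply, cons_val', cons_val_zero, cons_val_one,
      cons_val_fin_one]
  · push_cast
    linear_combination (-(y : ℂ) ^ 2) * Complex.I_sq
  · ring
  · ring
  · push_cast
    linear_combination (-(y : ℂ) ^ 2) * Complex.I_sq

lemma isSelfAdjoint_pauli : IsSelfAdjoint ((x : ℂ) • σX + (y : ℂ) • σY + (z : ℂ) • σZ) := by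
  ext i j
  fin_cases i <;> fin_cases j <;> simp [σX, σY, σZ]

lemma norm_toEuclideanCLM_pauli :
    ‖toEuclideanCLM (𝕜 := ℂ) ((x : ℂ) • σX + (y : ℂ) • σY + (z : ℂ) • σZ)‖
      = √(x ^ 2 + y ^ 2 + z ^ 2) := by
  set T := toEuclideanCLM (𝕜 := ℂ) ((x : ℂ) • σX + (y : ℂ) • σY + (z : ℂ) • σZ)
  have hT : star T = T := by rw [← map_star, (isSelfAdjoint_pauli x y z).star_eq]
  have hsq : ‖T‖ * ‖T‖ = x ^ 2 + y ^ 2 + z ^ 2 := by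
    rw [← CStarRing.norm_star_mul_self, hT, ← map_mul, pauli_mul_self, map_smul, map_one,
      norm_smul, norm_one, mul_one, Complex.norm_real, Real.norm_of_nonneg (by positivity)]
  rw [← hsq, Real.sqrt_mul_self (norm_nonneg T)]

lemma add_sqrt_mem_spectrum_pauli (t : ℝ) :
    ((t + √(x ^ 2 + y ^ 2 + z ^ 2) : ℝ) : ℂ) ∈ spectrum ℂ
      ((t : ℂ) • (1 : Matrix (Fin 2) (Fin 2) ℂ) + (x : ℂ) • σX + (y : ℂ) • σY + (z : ℂ) • σZ) := by
  have hr : ((√(x ^ 2 + y ^ 2 + z ^ 2) : ℝ) : ℂ) ^ 2 = x ^ 2 + y ^ 2 + z ^ 2 := by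
    exact_mod_cast Real.sq_sqrt (by positivity)
  rw [pauli_decomposition_eq, spectrum.mem_iff, isUnit_iff_isUnit_det, det_fin_two,
    isUnit_iff_ne_zero, not_not]
  simp only [Matrix.sub_apply, algebraMap_matrix_apply, Algebra.algebraMap_self, RingHom.id_apply,
    of_apply, cons_val', cons_val_zero, cons_val_one, cons_val_fin_one, if_pos, if_neg, zero_ne_one,
    one_ne_zero, not_false_eq_true, Complex.ofReal_add]
  linear_combination hr + (y : ℂ) ^ 2 * Complex.I_sq

theorem norm_toEuclideanCLM_pauli_decomposition (t : ℝ) (ht : 0 ≤ t) :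
    ‖toEuclideanCLM (𝕜 := ℂ)
        ((t : ℂ) • (1 : Matrix (Fin 2) (Fin 2) ℂ) + (x : ℂ) • σX + (y : ℂ) • σY + (z : ℂ) • σZ)‖
      = t + √(x ^ 2 + y ^ 2 + z ^ 2) := by
  set B := (x : ℂ) • σX + (y : ℂ) • σY + (z : ℂ) • σZ
  refine le_antisymm ?_ ?_
  · calc _ = ‖(t : ℂ) • 1 + toEuclideanCLM (𝕜 := ℂ) B‖ := by
          simp only [B, add_assoc, map_add, map_smul, map_one]
      _ ≤ ‖(t : ℂ) • (1 : EuclideanSpace ℂ (Fin 2) →L[ℂ] EuclideanSpace ℂ (Fin 2))‖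
          + ‖toEuclideanCLM (𝕜 := ℂ) B‖ := norm_add_le _ _
      _ = t + √(x ^ 2 + y ^ 2 + z ^ 2) := by
          rw [norm_smul, norm_one, mul_one, Complex.norm_real, Real.norm_of_nonneg ht,
            norm_toEuclideanCLM_pauli]
  · have h := spectrum.norm_le_norm_of_mem <|
      (AlgEquiv.spectrum_eq (toEuclideanCLM (n := Fin 2) (𝕜 := ℂ)) _).symm ▸
        add_sqrt_mem_spectrum_pauli x y z t
    rwa [Complex.norm_real, Real.norm_of_nonneg (by positivity)] at h

end Pauli

lemma Φm_sqrt_two_mul (a β c φ : ℝ) :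
    Φm a (√2 * β) c φ =
      !![(a : ℂ), β; β, c * (Real.cos φ + Real.sin φ * Complex.I)] := by
  have h2 : (√2 : ℂ) ≠ 0 := by exact_mod_cast (Real.sqrt_pos.mpr zero_lt_two).ne'
  ext i j
  fin_cases i <;> fin_cases j <;> simp [Φm, h2, mul_comm Complex.I, Complex.exp_mul_I]

theorem Qmap_outer (a b c φ : ℝ) :
    Qmap (outer a b c φ) =
      ((15*a^2 + 10*b^2 + 5*c^2 : ℝ) : ℂ) • (1 : Matrix (Fin 2) (Fin 2) ℂ)
        + ((2*Real.sqrt 2*b*(3*a + 2*c*Real.cos φ) : ℝ) : ℂ) • σX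
        + ((4*Real.sqrt 2*b*c*Real.sin φ : ℝ) : ℂ) • σY
        + ((9*a^2 + 2*b^2 - c^2 : ℝ) : ℂ) • σZ := by
  obtain ⟨β, rfl⟩ : ∃ β, b = √2 * β := ⟨b / √2, by field_simp⟩
  rw [show outer a (√2 * β) c φ = vecMulVec (tensorKetZero (Φm a (√2 * β) c φ))
    (star (tensorKetZero (Φm a (√2 * β) c φ))) from rfl, Φm_sqrt_two_mul,
    Qmap_vecMulVec_tensorKetZero, pauli_decomposition_eq]
  have h2 : (√2 : ℂ) ^ 2 = 2 := by exact_mod_cast Real.sq_sqrt zero_le_two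
  have hpyth : ((Real.cos φ : ℝ) : ℂ) ^ 2 + ((Real.sin φ : ℝ) : ℂ) ^ 2 = 1 := by
    exact_mod_cast Real.cos_sq_add_sin_sq φ
  generalize Real.cos φ = C at hpyth ⊢
  generalize Real.sin φ = S at hpyth ⊢
  ext i j
  fin_cases i <;> fin_cases j <;>
    simp only [Fin.zero_eta, Fin.mk_one, of_apply, cons_val', cons_val_zero, cons_val_one,
      cons_val_fin_one, map_add, map_mul, Complex.conj_ofReal, Complex.conj_I] <;> push_cast
  · linear_combination (-12 * (β : ℂ) ^ 2) * h2 + 4 * (c : ℂ) ^ 2 * hpyth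
      - 4 * (c : ℂ) ^ 2 * (S : ℂ) ^ 2 * Complex.I_sq
  · linear_combination (-(β : ℂ) * (6 * a + 4 * c * C - 4 * c * S * Complex.I)) * h2
  · linear_combination (-(β : ℂ) * (6 * a + 4 * c * C + 4 * c * S * Complex.I)) * h2
  · linear_combination (-8 * (β : ℂ) ^ 2) * h2 + 6 * (c : ℂ) ^ 2 * hpyth
      - 6 * (c : ℂ) ^ 2 * (S : ℂ) ^ 2 * Complex.I_sq

theorem stmt10 (a b c φ : ℝ) :
    Qmap (outer a b c φ) =
      ((15*a^2 + 10*b^2 + 5*c^2 : ℝ) : ℂ) • (1 : Matrix (Fin 2) (Fin 2) ℂ)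
        + ((2*Real.sqrt 2*b*(3*a + 2*c*Real.cos φ) : ℝ) : ℂ) • σX
        + ((4*Real.sqrt 2*b*c*Real.sin φ : ℝ) : ℂ) • σY
        + ((9*a^2 + 2*b^2 - c^2 : ℝ) : ℂ) • σZ ∧
    ‖Matrix.toEuclideanCLM (𝕜 := ℂ) (Qmap (outer a b c φ))‖ =
      15*a^2 + 10*b^2 + 5*c^2 +
        Real.sqrt (8*b^2*((3*a + 2*c*Real.cos φ)^2 + (2*c*Real.sin φ)^2)
          + (9*a^2 + 2*b^2 - c^2)^2) := by
  refine ⟨Qmap_outer a b c φ, ?_⟩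
  rw [Qmap_outer, norm_toEuclideanCLM_pauli_decomposition _ _ _ _ (by positivity)]
  congr 2
  linear_combination (4 * b ^ 2 * (3 * a + 2 * c * Real.cos φ) ^ 2
    + 16 * b ^ 2 * c ^ 2 * Real.sin φ ^ 2) * Real.sq_sqrt (zero_le_two (α := ℝ))
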